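/- Let p be a prime, R a commutative ring, and φ : R[[X]] → R[[X]] the R-algebra endomorphism given by substituting (1+X)^p − 1 for X, applied entrywise to matrices. Let P, H ∈ M₂(R[[X]]) and let ℓ ≥ 1 be an integer such that H ≡ Id modulo X^ℓ. If H·P = P·φ(H), then H_ℓ·P(0) = p^ℓ·P(0)·H_ℓ, where H_ℓ ∈ M₂(R) is the coefficient of X^ℓ in H and P(0) ∈ M₂(R) is the constant coefficient of P. -/

import Mathlib

open PowerSeries

/-- Substitution of the power series `g` (of positive order) into `f`: the coefficient
of `X^j` in `f(g)` is `Σ_{n ≤ j} f_n · [X^j](g^n)`. -/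
noncomputable def substSeries {R : Type*} [CommRing R] (g f : PowerSeries R) :
    PowerSeries R :=
  PowerSeries.mk fun j =>
    ∑ n ∈ Finset.range (j + 1),
      PowerSeries.coeff (R := R) n f * PowerSeries.coeff (R := R) j (g ^ n)

/-- `φ : R[[X]] → R[[X]]` is the substitution `X ↦ (1+X)^p - 1`. -/
noncomputable def phiCycl (p : ℕ) {R : Type*} [CommRing R] (f : PowerSeries R) :
    PowerSeries R :=
  substSeries ((1 + PowerSeries.X) ^ p - 1) f

/-! Write `H = 1 + E` with `X^ℓ ∣ E`; then `E·P = P·φ(E)`. Since `(1+X)^p - 1 = pX + O(X²)`,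
`φ(E) ≡ p^ℓ E_ℓ X^ℓ` modulo `X^(ℓ+1)`, so the `X^ℓ`-coefficients of the two sides are
`E_ℓ·P(0)` and `P(0)·p^ℓ E_ℓ`, and `E_ℓ = H_ℓ` because `ℓ ≥ 1`. -/

namespace PowerSeries

variable {R : Type*} [CommRing R]

theorem coeff_self_pow_of_constantCoeff_eq_zero {g : R⟦X⟧} (hg : constantCoeff g = 0)
    (n : ℕ) : coeff n (g ^ n) = coeff 1 g ^ n := by
  obtain ⟨h, rfl⟩ := X_dvd_iff.mpr hg
  rw [mul_pow, coeff_X_pow_mul', if_pos le_rfl, Nat.sub_self, coeff_zero_eq_constantCoeff,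
    map_pow, ← coeff_zero_eq_constantCoeff, ← zero_add 1, coeff_succ_X_mul]

theorem coeff_mul_of_X_pow_dvd {a : R⟦X⟧} {l : ℕ} (ha : X ^ l ∣ a) (b : R⟦X⟧) :
    coeff l (a * b) = coeff l a * constantCoeff b := by
  obtain ⟨c, rfl⟩ := ha
  rw [mul_assoc, coeff_X_pow_mul', coeff_X_pow_mul', if_pos le_rfl, if_pos le_rfl,
    Nat.sub_self, coeff_zero_eq_constantCoeff, map_mul]

theorem coeff_one_one_add_X_pow_sub_one (p : ℕ) :
    coeff 1 ((1 + X : R⟦X⟧) ^ p - 1) = (p : R) := by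
  have hcoe : ((1 + Polynomial.X : Polynomial R) ^ p : Polynomial R) = (1 + X : R⟦X⟧) ^ p := by
    push_cast; rfl
  rw [map_sub, ← hcoe, Polynomial.coeff_coe, Polynomial.coeff_one_add_X_pow, coeff_one,
    if_neg one_ne_zero, sub_zero, Nat.choose_one_right]

end PowerSeries

namespace substSeries

variable {R : Type*} [CommRing R]

theorem add (g f₁ f₂ : R⟦X⟧) :
    substSeries g (f₁ + f₂) = substSeries g f₁ + substSeries g f₂ := by
  ext j
  simp only [substSeries, coeff_mk, map_add, add_mul, Finset.sum_add_distrib]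

theorem zero (g : R⟦X⟧) : substSeries g 0 = 0 := by
  ext j
  simp [substSeries]

theorem one (g : R⟦X⟧) : substSeries g 1 = 1 := by
  ext j
  rw [substSeries, coeff_mk, Finset.sum_eq_single 0 (fun n _ hn => by simp [coeff_one, hn])
    (by simp), coeff_zero_one, one_mul, pow_zero]

theorem X_pow_dvd {g f : R⟦X⟧} {l : ℕ} (hf : X ^ l ∣ f) : X ^ l ∣ substSeries g f := by
  refine X_pow_dvd_iff.mpr fun j hj => ?_
  rw [substSeries, coeff_mk]
  refine Finset.sum_eq_zero fun n hn => ?_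
  rw [X_pow_dvd_iff.mp hf n (by grind), zero_mul]

theorem coeff_of_X_pow_dvd {g f : R⟦X⟧} (hg : constantCoeff g = 0) {l : ℕ}
    (hf : X ^ l ∣ f) :
    coeff l (substSeries g f) = coeff 1 g ^ l * coeff l f := by
  rw [substSeries, coeff_mk, Finset.sum_range_succ,
    Finset.sum_eq_zero fun n hn => by rw [X_pow_dvd_iff.mp hf n (by grind), zero_mul],
    zero_add, coeff_self_pow_of_constantCoeff_eq_zero hg, mul_comm]

end substSeries

section phiCycl

variable {R : Type*} [CommRing R] (p : ℕ)

theorem X_pow_dvd_phiCycl {f : R⟦X⟧} {l : ℕ} (hf : X ^ l ∣ f) : X ^ l ∣ phiCycl p f :=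
  substSeries.X_pow_dvd hf

theorem coeff_phiCycl_of_X_pow_dvd {f : R⟦X⟧} {l : ℕ} (hf : X ^ l ∣ f) :
    coeff l (phiCycl p f) = (p : R) ^ l * coeff l f := by
  rw [phiCycl, substSeries.coeff_of_X_pow_dvd (by simp) hf, coeff_one_one_add_X_pow_sub_one]

theorem Matrix.map_phiCycl_one_add {n : Type*} [DecidableEq n] (E : Matrix n n R⟦X⟧) :
    (1 + E).map (phiCycl p) = 1 + E.map (phiCycl p) := by
  ext i j : 1
  rw [Matrix.map_apply, Matrix.add_apply, Matrix.add_apply, phiCycl, substSeries.add,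
    Matrix.one_apply]
  split_ifs
  · rw [substSeries.one]; rfl
  · rw [substSeries.zero]; rfl

end phiCycl

namespace Matrix

variable {R : Type*} [CommRing R] {m n o : Type*} [Fintype n] {l : ℕ}

theorem map_coeff_mul_of_X_pow_dvd_left {A : Matrix m n R⟦X⟧} (hA : ∀ i j, X ^ l ∣ A i j)
    (B : Matrix n o R⟦X⟧) :
    (A * B).map (coeff l) = A.map (coeff l) * B.map constantCoeff := by
  ext i k
  simp only [map_apply, mul_apply, map_sum, coeff_mul_of_X_pow_dvd (hA _ _)]

theorem map_coeff_mul_of_X_pow_dvd_right {A : Matrix n o R⟦X⟧} (hA : ∀ i j, X ^ l ∣ A i j)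
    (B : Matrix m n R⟦X⟧) :
    (B * A).map (coeff l) = B.map constantCoeff * A.map (coeff l) := by
  ext i k
  simp only [map_apply, mul_apply, map_sum]
  exact Finset.sum_congr rfl fun j _ => by
    rw [mul_comm, coeff_mul_of_X_pow_dvd (hA _ _), mul_comm]

end Matrix

theorem coeff_relation_of_comm_general (p : ℕ) (R : Type*) [CommRing R]
    (P H : Matrix (Fin 2) (Fin 2) (PowerSeries R)) (l : ℕ) (hl : 1 ≤ l)
    (hH : ∀ i j, (PowerSeries.X : PowerSeries R) ^ l ∣ (H - 1) i j)
    (hHP : H * P = P * H.map (phiCycl p)) :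
    H.map (PowerSeries.coeff (R := R) l) * P.map (PowerSeries.constantCoeff (R := R)) =
      (p : R) ^ l •
        (P.map (PowerSeries.constantCoeff (R := R)) * H.map (PowerSeries.coeff (R := R) l)) := by
  set E := H - 1
  have hφE : ∀ i j, X ^ l ∣ E.map (phiCycl p) i j := fun i j => X_pow_dvd_phiCycl p (hH i j)
  have hcomm : E * P = P * E.map (phiCycl p) := by
    rw [← sub_add_cancel H 1, add_comm, Matrix.map_phiCycl_one_add] at hHP
    simpa only [add_mul, mul_add, one_mul, mul_one, add_right_inj] using hHP
  have hcoeffE : E.map (coeff l) = H.map (coeff l) := by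
    ext i j
    simp [E, Matrix.one_apply, coeff_one, apply_ite, Nat.one_le_iff_ne_zero.mp hl]
  have hcoeffφE : (E.map (phiCycl p)).map (coeff l) = (p : R) ^ l • E.map (coeff l) := by
    ext i j
    simp only [Matrix.map_apply, Matrix.smul_apply, coeff_phiCycl_of_X_pow_dvd p (hH i j),
      smul_eq_mul]
  calc H.map (coeff l) * P.map constantCoeff
      = (E * P).map (coeff l) := by rw [Matrix.map_coeff_mul_of_X_pow_dvd_left hH, hcoeffE]
    _ = (P * E.map (phiCycl p)).map (coeff l) := by rw [hcomm]
    _ = (p : R) ^ l • (P.map constantCoeff * H.map (coeff l)) := by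
      rw [Matrix.map_coeff_mul_of_X_pow_dvd_right hφE, hcoeffφE, hcoeffE, Matrix.mul_smul]

/-- If `H ≡ Id mod X^ℓ` with `ℓ ≥ 1` and `H·P = P·φ(H)`, then comparing coefficients
of `X^ℓ` gives `H_ℓ·P(0) = p^ℓ·P(0)·H_ℓ`. -/
theorem coeff_relation_of_comm (p : ℕ) (hp : p.Prime) (R : Type*) [CommRing R]
    (P H : Matrix (Fin 2) (Fin 2) (PowerSeries R)) (l : ℕ) (hl : 1 ≤ l)
    (hH : ∀ i j, (PowerSeries.X : PowerSeries R) ^ l ∣ (H - 1) i j)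
    (hHP : H * P = P * H.map (phiCycl p)) :
    H.map (PowerSeries.coeff (R := R) l) * P.map (PowerSeries.constantCoeff (R := R)) =
      (p : R) ^ l •
        (P.map (PowerSeries.constantCoeff (R := R)) * H.map (PowerSeries.coeff (R := R) l)) :=
  coeff_relation_of_comm_general p R P H l hl hH hHP
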